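/- Let a ∈ ℚ₂. Then a belongs to ℤ₂ (i.e. the 2-adic valuation of a is ≥ 0) if and only if 1 + 2·a³ is a cube in ℚ₂. -/

import Mathlib

/-!
For `‖a‖ ≤ 1`, the element `u = 1 + p a^m` of `ℤ_[p]` satisfies `‖u - 1‖ ≤ p⁻¹ < 1 = ‖m‖²`
when `p ∤ m`, so Hensel's lemma applied to `X^m - u` at `1` produces an `m`-th root of `u`.
Conversely, if `v(a) < 0` then `v(1 + p a^m) = 1 + m v(a)` is not divisible by `m ≥ 2`,
whereas every nonzero `m`-th power has valuation divisible by `m`.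
-/

open Polynomial

namespace PadicInt

variable {p : ℕ} [Fact p.Prime]

theorem exists_pow_eq_of_norm_sub_one_lt {m : ℕ} {u : ℤ_[p]}
    (h : ‖u - 1‖ < ‖(m : ℤ_[p])‖ ^ 2) : ∃ z : ℤ_[p], z ^ m = u := by
  obtain ⟨z, hz, -⟩ := hensels_lemma (p := p) (F := X ^ m - C u) (a := 1)
    (by simpa [norm_sub_rev, derivative_X_pow] using h)
  exact ⟨z, by simpa [sub_eq_zero] using hz⟩

end PadicInt

namespace Padic

variable {p : ℕ} [hp : Fact p.Prime]

theorem exists_pow_eq_one_add_p_mul_pow_of_norm_le_one {m : ℕ} (hpm : p.Coprime m)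
    {a : ℚ_[p]} (ha : ‖a‖ ≤ 1) : ∃ z : ℚ_[p], z ^ m = 1 + p * a ^ m := by
  set b : ℤ_[p] := ⟨a, ha⟩
  have hsmall : ‖(1 + p * b ^ m) - 1‖ < ‖(m : ℤ_[p])‖ ^ 2 := by
    rw [add_sub_cancel_left, PadicInt.norm_natCast_eq_one_iff.mpr hpm, one_pow]
    rw [mul_comm]
    exact PadicInt.norm_lt_one_mul (PadicInt.norm_natCast_lt_one_iff.mpr dvd_rfl)
  obtain ⟨z, hz⟩ := PadicInt.exists_pow_eq_of_norm_sub_one_lt hsmall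
  exact ⟨z, by simpa using congrArg ((↑) : ℤ_[p] → ℚ_[p]) hz⟩

theorem valuation_eq_of_norm_eq {x y : ℚ_[p]} (hx : x ≠ 0) (hy : y ≠ 0) (h : ‖x‖ = ‖y‖) :
    x.valuation = y.valuation := by
  have hp1 : (1 : ℝ) < p := mod_cast hp.out.one_lt
  rw [norm_eq_zpow_neg_valuation hx, norm_eq_zpow_neg_valuation hy,
    zpow_right_inj₀ (by positivity) hp1.ne'] at h
  exact neg_inj.mp h

theorem valuation_one_add_of_valuation_neg {x : ℚ_[p]} (hx : x.valuation < 0) :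
    (1 + x).valuation = x.valuation := by
  have hx1 : 1 < ‖x‖ := not_le.mp fun h ↦ (norm_le_one_iff_val_nonneg x).mp h |>.not_gt hx
  have hnorm : ‖1 + x‖ = ‖x‖ := by
    rw [add_eq_max_of_ne (by simpa using hx1.ne), norm_one, max_eq_right hx1.le]
  have hx0 : x ≠ 0 := norm_pos_iff.mp (zero_lt_one.trans hx1)
  have h1x0 : 1 + x ≠ 0 := norm_pos_iff.mp (hnorm ▸ zero_lt_one.trans hx1)
  exact valuation_eq_of_norm_eq h1x0 hx0 hnorm

theorem norm_le_one_of_pow_eq_one_add_p_mul_pow {m : ℕ} (hm : 2 ≤ m) {a z : ℚ_[p]}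
    (hz : z ^ m = 1 + p * a ^ m) : ‖a‖ ≤ 1 := by
  rw [norm_le_one_iff_val_nonneg]
  by_contra! ha
  have ha0 : a ≠ 0 := by rintro rfl; simp at ha
  have hv : (p * a ^ m).valuation = 1 + m * a.valuation := by
    rw [valuation_mul (mod_cast hp.out.ne_zero) (pow_ne_zero _ ha0), valuation_p, valuation_pow]
  have hv_neg : (p * a ^ m).valuation < 0 := by
    rw [hv]
    nlinarith
  have hval := congrArg valuation hz
  rw [valuation_pow, valuation_one_add_of_valuation_neg hv_neg, hv] at hval
  have hdvd : (m : ℤ) ∣ 1 := ⟨z.valuation - a.valuation, by linarith⟩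
  have := Nat.dvd_one.mp (Int.natCast_dvd_natCast.mp hdvd)
  omega

theorem norm_le_one_iff_exists_pow_eq_one_add_p_mul_pow {m : ℕ} (hm : 2 ≤ m)
    (hpm : p.Coprime m) (a : ℚ_[p]) : ‖a‖ ≤ 1 ↔ ∃ z : ℚ_[p], z ^ m = 1 + p * a ^ m :=
  ⟨exists_pow_eq_one_add_p_mul_pow_of_norm_le_one hpm,
    fun ⟨_, hz⟩ ↦ norm_le_one_of_pow_eq_one_add_p_mul_pow hm hz⟩

end Padic

/-- a ∈ ℚ₂ lies in ℤ₂ iff 1 + 2·a³ is a cube in ℚ₂. -/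
theorem stmt_10 (a : ℚ_[2]) :
    ‖a‖ ≤ 1 ↔ ∃ z : ℚ_[2], z ^ 3 = 1 + 2 * a ^ 3 := by
  simpa using Padic.norm_le_one_iff_exists_pow_eq_one_add_p_mul_pow (p := 2) (m := 3)
    (by norm_num) (by norm_num) a
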